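/- arXiv:2011.00550 — 4 statements merged into one kernel-verified Lean document; each statement's English description precedes it below -/
import Mathlib

section
/- Let σ > 0 and C ≥ 0 be real constants, let f(x) = 𝟙(x ≥ 0) be the indicator function and g(x) = max{log₂(1 + e^{σC}), 2} − log₂(1 + e^{−σx}). Then f(x) ≤ g(x) for all x ∈ [−C, C]. -/
open Real

lemma Real.monotone_logb_one_add_exp {b : ℝ} (hb : 1 < b) :
    Monotone fun t => logb b (1 + exp t) :=
  fun _ _ hst => logb_le_logb_of_le hb (by positivity) (by gcongr)

lemma Real.logb_two_one_add_exp_le_one {t : ℝ} (ht : t ≤ 0) : logb 2 (1 + exp t) ≤ 1 := by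
  simpa [one_add_one_eq_two] using monotone_logb_one_add_exp one_lt_two ht

theorem indicator_le_max_logb_sub_general
    (σ C : ℝ) (hσ : 0 < σ) (x : ℝ) (hx : x ∈ Set.Icc (-C) C) :
    (if 0 ≤ x then (1 : ℝ) else 0) ≤
      max (Real.logb 2 (1 + Real.exp (σ * C))) 2 - Real.logb 2 (1 + Real.exp (-σ * x)) := by
  rcases le_or_gt 0 x with hx₀ | hx₀
  · have hlog : logb 2 (1 + exp (-σ * x)) ≤ 1 :=
      logb_two_one_add_exp_le_one (by nlinarith)
    rw [if_pos hx₀]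
    linarith [le_max_right (logb 2 (1 + exp (σ * C))) 2]
  · have hlog : logb 2 (1 + exp (-σ * x)) ≤ logb 2 (1 + exp (σ * C)) :=
      monotone_logb_one_add_exp one_lt_two (by nlinarith [hx.1])
    rw [if_neg hx₀.not_ge]
    linarith [le_max_left (logb 2 (1 + exp (σ * C))) 2]

/-- Lemma 2: for σ > 0 and C ≥ 0, the indicator `𝟙(x ≥ 0)` is bounded above by
`max (log₂ (1 + e^(σ C))) 2 − log₂ (1 + e^(-σ x))` for all `x ∈ [-C, C]`. -/
theorem indicator_le_max_logb_sub
    (σ C : ℝ) (hσ : 0 < σ) (hC : 0 ≤ C) (x : ℝ) (hx : x ∈ Set.Icc (-C) C) :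
    (if 0 ≤ x then (1 : ℝ) else 0) ≤
      max (Real.logb 2 (1 + Real.exp (σ * C))) 2 - Real.logb 2 (1 + Real.exp (-σ * x)) :=
  indicator_le_max_logb_sub_general σ C hσ x hx
end

section
/- Assume the utility u(i, k) is monotonically decreasing in the position k for each item i, and that the ranking k is induced by sorting the scores in descending order, i.e., for all items i, j one has k(j) < k(i) if and only if s_i < s_j. Then for every permutation k⋆ : Fin n ≃ Fin n, the utility regret satisfies ∑_{i=1}^{n} u(i, k⋆(i)) − ∑_{i=1}^{n} u(i, k(i)) ≤ L''(s). -/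
/-!
The regret splits item by item. If `k⋆` puts item `i` ahead of its position `k i`, that
position is `k j` for an item `j` ranked ahead of `i`, i.e. with `s i < s j`, so the loss on `i` is
a single term of `L''`; otherwise antitonicity makes the loss nonpositive.
-/

open Finset

theorem Antitone.sub_le_sum_abs_sub {ι α : Type*} [LinearOrder α] {f : α → ℝ} (hf : Antitone f)
    (k : ι ≃ α) (i : ι) {S : Finset ι} (hS : ∀ j, k j < k i → j ∈ S) (p : α) :
    f p - f (k i) ≤ ∑ j ∈ S, |f (k j) - f (k i)| := by
  rcases lt_or_ge p (k i) with hp | hp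
  · have hmem : k.symm p ∈ S := hS _ (by rwa [k.apply_symm_apply])
    calc f p - f (k i) ≤ |f (k (k.symm p)) - f (k i)| := by
          rw [k.apply_symm_apply]; exact le_abs_self _
      _ ≤ ∑ j ∈ S, |f (k j) - f (k i)| :=
          single_le_sum (f := fun j => |f (k j) - f (k i)|) (fun _ _ => abs_nonneg _) hmem
  · calc f p - f (k i) ≤ 0 := sub_nonpos.mpr (hf hp)
      _ ≤ ∑ j ∈ S, |f (k j) - f (k i)| := sum_nonneg fun _ _ => abs_nonneg _

/-- Theorem 2: if the utility `u i k` is antitone in the position `k` and the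
ranking `k` sorts the scores in descending order, then the utility regret with
respect to any assignment `k⋆` is bounded above by `L''(s)`. -/
theorem urank_regret_le_Lpp
    {n : ℕ} (u : Fin n → Fin n → ℝ) (hu : ∀ i, Antitone (u i))
    (k : Equiv.Perm (Fin n)) (s : Fin n → ℝ)
    (hks : ∀ i j, k j < k i ↔ s i < s j)
    (kstar : Equiv.Perm (Fin n)) :
    (∑ i, u i (kstar i)) - (∑ i, u i (k i)) ≤
      ∑ i, ∑ j ∈ univ.filter (fun j => s i < s j), |u i (k j) - u i (k i)| := by
  rw [← sum_sub_distrib]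
  exact sum_le_sum fun i _ =>
    (hu i).sub_le_sum_abs_sub k i (fun j hj => mem_filter.mpr ⟨mem_univ j, (hks i j).mp hj⟩) (kstar i)
end

section
/- Assume the utility u(i, k) is monotonically decreasing in the position k for each item i, the ranking scores satisfy |s_i| ≤ C for all items i with C ≥ 0 and σ > 0, and the ranking k is induced by sorting the scores in descending order, i.e., for all items i, j one has k(j) < k(i) if and only if s_i < s_j. Let C₁ = max{log₂(1 + e^{2σC}), 2} and C₂ = C₁ · ∑_{j=1}^{n} ∑_{i : k(j) < k(i)} (u(j, k(j)) − u(j, k(i))). Then for every permutation k⋆ : Fin n ≃ Fin n, the utility regret satisfies ∑_{i=1}^{n} u(i, k⋆(i)) − ∑_{i=1}^{n} u(i, k(i)) ≤ L'(s) + C₂. -/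
/-!
Write `A i j = u i (k j) - u i (k i) ≥ 0` for the gain of item `i` when moved up to the position of
`j`, and `B j i = u j (k j) - u j (k i) ≥ 0` for the loss of `j` moved down to `k i`; then
`ΔUtil(i, j) = A i j - B j i`. Since utilities decrease with position, each item's regret is at most
the total gain of moving it to any better position, so the regret is at most `∑ A`. For a pair with
`k j < k i` the scores satisfy `s i < s j`, so the weight `λ = log₂ (1 + e^{-σ (s i - s j)})` lies in
`[1, C₁]`, and `A ≤ (A - B) λ + C₁ B` because the difference is `A (λ - 1) + B (C₁ - λ) ≥ 0`.
-/

open Finset Real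

theorem Antitone.sub_le_sum_Iio_sub {α β : Type*} [LinearOrder α] [LocallyFiniteOrderBot α]
    [AddCommGroup β] [PartialOrder β] [IsOrderedAddMonoid β] {f : α → β} (hf : Antitone f)
    (a b : α) : f a - f b ≤ ∑ p ∈ Iio b, (f p - f b) := by
  have hnonneg : ∀ p ∈ Iio b, 0 ≤ f p - f b := fun p hp =>
    sub_nonneg.2 (hf (mem_Iio.1 hp).le)
  rcases lt_or_ge a b with hab | hba
  · exact single_le_sum hnonneg (mem_Iio.2 hab)
  · exact (sub_nonpos.2 (hf hba)).trans (sum_nonneg hnonneg)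

theorem sum_sub_sum_le_sum_filter_lt {ι α β : Type*} [Fintype ι] [LinearOrder α]
    [LocallyFiniteOrderBot α] [AddCommGroup β] [PartialOrder β] [IsOrderedAddMonoid β]
    {u : ι → α → β} (hu : ∀ i, Antitone (u i)) (k : ι ≃ α) (kstar : ι → α) :
    ∑ i, u i (kstar i) - ∑ i, u i (k i) ≤
      ∑ i, ∑ j ∈ univ.filter (fun j => k j < k i), (u i (k j) - u i (k i)) := by
  rw [← sum_sub_distrib]
  refine sum_le_sum fun i _ => ?_
  have hreindex : ∑ j ∈ univ.filter (fun j => k j < k i), (u i (k j) - u i (k i)) =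
      ∑ p ∈ Iio (k i), (u i p - u i (k i)) :=
    sum_equiv k (fun j => by simp) fun _ _ => rfl
  exact hreindex ▸ (hu i).sub_le_sum_Iio_sub (kstar i) (k i)

theorem one_le_logb_two_one_add_exp {x : ℝ} (hx : 0 ≤ x) : 1 ≤ logb 2 (1 + exp x) := by
  calc (1 : ℝ) = logb 2 2 := (logb_self_eq_one (by norm_num)).symm
    _ ≤ logb 2 (1 + exp x) :=
      logb_le_logb_of_le (by norm_num) (by norm_num) (by linarith [one_le_exp hx])

theorem logb_two_one_add_exp_le_logb_two_one_add_exp {x y : ℝ} (hxy : x ≤ y) :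
    logb 2 (1 + exp x) ≤ logb 2 (1 + exp y) :=
  logb_le_logb_of_le (by norm_num) (by positivity) (by linarith [exp_le_exp.2 hxy])

theorem neg_mul_sub_le_two_mul_mul {σ C x y : ℝ} (hσ : 0 ≤ σ) (hx : |x| ≤ C) (hy : |y| ≤ C) :
    -σ * (x - y) ≤ 2 * σ * C := by
  have hyx : y - x ≤ 2 * C := by linarith [neg_abs_le x, le_abs_self y]
  nlinarith

theorem le_sub_mul_add_mul {a b w c : ℝ} (ha : 0 ≤ a) (hb : 0 ≤ b) (hw : 1 ≤ w) (hwc : w ≤ c) :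
    a ≤ (a - b) * w + c * b := by
  nlinarith [mul_nonneg ha (sub_nonneg.2 hw), mul_nonneg hb (sub_nonneg.2 hwc)]

theorem gain_le_deltaUtil_mul_add_mul {ι α : Type*} [Preorder α] {u : ι → α → ℝ}
    (hu : ∀ i, Antitone (u i)) {k : ι → α} {i j : ι} (hji : k j ≤ k i) {w c : ℝ} (hw : 1 ≤ w)
    (hwc : w ≤ c) :
    u i (k j) - u i (k i) ≤
      (u i (k j) + u j (k i) - u i (k i) - u j (k j)) * w + c * (u j (k j) - u j (k i)) := by
  have h := le_sub_mul_add_mul (sub_nonneg.2 (hu i hji)) (sub_nonneg.2 (hu j hji)) hw hwc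
  convert h using 2
  ring

theorem sum_sum_filter_comm {ι β : Type*} [Fintype ι] [AddCommMonoid β] (r : ι → ι → Prop)
    [DecidableRel r] (f : ι → ι → β) :
    ∑ i, ∑ j ∈ univ.filter (fun j => r j i), f j i =
      ∑ j, ∑ i ∈ univ.filter (fun i => r j i), f j i := by
  simp_rw [sum_filter]
  exact sum_comm

theorem urank_regret_le_Lp_add_const_general
    {n : ℕ} (u : Fin n → Fin n → ℝ) (hu : ∀ i, Antitone (u i))
    (k : Equiv.Perm (Fin n)) (s : Fin n → ℝ)
    (σ C : ℝ) (hσ : 0 < σ) (hs : ∀ i, |s i| ≤ C)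
    (hks : ∀ i j, k j < k i ↔ s i < s j)
    (kstar : Equiv.Perm (Fin n)) :
    (∑ i, u i (kstar i)) - (∑ i, u i (k i)) ≤
      (∑ i, ∑ j ∈ univ.filter (fun j => k j < k i),
        (u i (k j) + u j (k i) - u i (k i) - u j (k j)) *
          Real.logb 2 (1 + Real.exp (-σ * (s i - s j))))
      + (max (Real.logb 2 (1 + Real.exp (2 * σ * C))) 2) *
          (∑ j, ∑ i ∈ univ.filter (fun i => k j < k i), (u j (k j) - u j (k i))) := by
  set C₁ := max (logb 2 (1 + exp (2 * σ * C))) 2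
  have hpair : ∀ i, ∀ j ∈ univ.filter (fun j => k j < k i),
      u i (k j) - u i (k i) ≤
        (u i (k j) + u j (k i) - u i (k i) - u j (k j)) * logb 2 (1 + exp (-σ * (s i - s j))) +
          C₁ * (u j (k j) - u j (k i)) := by
    intro i j hj
    have hji := (mem_filter.1 hj).2
    have hexponent : 0 ≤ -σ * (s i - s j) := by nlinarith [(hks i j).1 hji]
    refine gain_le_deltaUtil_mul_add_mul hu hji.le (one_le_logb_two_one_add_exp hexponent) ?_
    exact (logb_two_one_add_exp_le_logb_two_one_add_exp
      (neg_mul_sub_le_two_mul_mul hσ.le (hs i) (hs j))).trans (le_max_left _ _)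
  calc (∑ i, u i (kstar i)) - (∑ i, u i (k i))
      ≤ ∑ i, ∑ j ∈ univ.filter (fun j => k j < k i), (u i (k j) - u i (k i)) :=
        sum_sub_sum_le_sum_filter_lt hu k kstar
    _ ≤ _ := by
        rw [← sum_sum_filter_comm (fun j i => k j < k i), mul_sum, ← sum_add_distrib]
        refine sum_le_sum fun i _ => ?_
        rw [mul_sum, ← sum_add_distrib]
        exact sum_le_sum (hpair i)

/-- Theorem 3: under the assumptions of Theorems 1 and 2, the utility regret is
bounded above by `L'(s) + C₂`. -/
theorem urank_regret_le_Lp_add_const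
    {n : ℕ} (u : Fin n → Fin n → ℝ) (hu : ∀ i, Antitone (u i))
    (k : Equiv.Perm (Fin n)) (s : Fin n → ℝ)
    (σ C : ℝ) (hσ : 0 < σ) (hC : 0 ≤ C) (hs : ∀ i, |s i| ≤ C)
    (hks : ∀ i j, k j < k i ↔ s i < s j)
    (kstar : Equiv.Perm (Fin n)) :
    (∑ i, u i (kstar i)) - (∑ i, u i (k i)) ≤
      (∑ i, ∑ j ∈ univ.filter (fun j => k j < k i),
        (u i (k j) + u j (k i) - u i (k i) - u j (k j)) *
          Real.logb 2 (1 + Real.exp (-σ * (s i - s j))))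
      + (max (Real.logb 2 (1 + Real.exp (2 * σ * C))) 2) *
          (∑ j, ∑ i ∈ univ.filter (fun i => k j < k i), (u j (k j) - u j (k i))) :=
  urank_regret_le_Lp_add_const_general u hu k s σ C hσ hs hks kstar
end

section
/- Let n ≥ 1. Assume the utility u(i, k) is monotonically decreasing in the position k for each item i, and that the ranking k is induced by sorting the scores in descending order, i.e., for all items i, j one has k(j) < k(i) if and only if s_i < s_j. Then L''(s) ≥ ∑_{i=1}^{n} u(i, 1) − ∑_{i=1}^{n} u(i, k(i)), where 1 denotes the top position. -/
/-! For an item `i` not at the top, the item shown at the top has a higher score, so its pair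
alone contributes `|u(i, 1) - u(i, k i)| ≥ u(i, 1) - u(i, k i)` to `L''`. -/

open Finset

theorem sub_le_sum_abs_sub_of_le {ι α β : Type*} [Fintype ι] [LinearOrder α]
    [AddCommGroup β] [LinearOrder β] [IsOrderedAddMonoid β]
    (e : ι ≃ α) (v : α → β) {a p : α} (hap : a ≤ p) :
    v a - v p ≤ ∑ j ∈ univ.filter (fun j => e j < p), |v (e j) - v p| := by
  obtain rfl | hlt := hap.eq_or_lt
  · simpa using sum_nonneg fun j _ => abs_nonneg (v (e j) - v a)
  · have hmem : e.symm a ∈ univ.filter (fun j => e j < p) := by simpa using hlt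
    calc v a - v p ≤ |v (e (e.symm a)) - v p| := by simpa using le_abs_self (v a - v p)
      _ ≤ _ := single_le_sum (f := fun j => |v (e j) - v p|) (fun _ _ => abs_nonneg _) hmem

theorem urank_Lpp_ge_top_regret_general
    {n : ℕ} (hn : 0 < n)
    (u : Fin n → Fin n → ℝ)
    (k : Equiv.Perm (Fin n)) (s : Fin n → ℝ)
    (hks : ∀ i j, k j < k i ↔ s i < s j) :
    (∑ i, u i (⟨0, hn⟩ : Fin n)) - (∑ i, u i (k i)) ≤
      ∑ i, ∑ j ∈ univ.filter (fun j => s i < s j), |u i (k j) - u i (k i)| := by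
  rw [← sum_sub_distrib]
  refine sum_le_sum fun i _ => ?_
  rw [filter_congr fun j _ => (hks i j).symm]
  exact sub_le_sum_abs_sub_of_le k (u i) (Fin.mk_le_of_le_val (Nat.zero_le _))

/-- The key inequality in the proof of Theorem 2: `L''(s)` is bounded below by
`∑ i u(i, 1) − ∑ i u(i, k i)` where `1` denotes the top position. -/
theorem urank_Lpp_ge_top_regret
    {n : ℕ} (hn : 0 < n)
    (u : Fin n → Fin n → ℝ) (hu : ∀ i, Antitone (u i))
    (k : Equiv.Perm (Fin n)) (s : Fin n → ℝ)
    (hks : ∀ i j, k j < k i ↔ s i < s j) :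
    (∑ i, u i (⟨0, hn⟩ : Fin n)) - (∑ i, u i (k i)) ≤
      ∑ i, ∑ j ∈ univ.filter (fun j => s i < s j), |u i (k j) - u i (k i)| :=
  urank_Lpp_ge_top_regret_general hn u k s hks
end
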